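/- Let A ⊆ Z_n × Z_n and let H be a subgroup of Z_n × Z_n with |A| < |H|. Then ΔH is not completely contained in Z(1̂_A^{sym}): there exists a nonzero h ∈ H with 1̂_A^{sym}(h) ≠ 0. -/
import Mathlib


open Complex
open scoped Classical

/-- The character value `e^{2πi t/n}` for `t : ZMod n`. -/
noncomputable def charVal (n : ℕ) (t : ZMod n) : ℂ :=
  Complex.exp (2 * Real.pi * Complex.I * (t.val : ℂ) / (n : ℂ))

/-- The symplectic form `⟨x,y⟩ = x₁y₂ - x₂y₁` on `ZMod n × ZMod n`. -/
def sympForm {n : ℕ} (x y : ZMod n × ZMod n) : ZMod n :=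
  x.1 * y.2 - x.2 * y.1

/-- Symplectic Fourier transform of the indicator of `A`. -/
noncomputable def symFT {n : ℕ} (A : Set (ZMod n × ZMod n)) (ξ : ZMod n × ZMod n) : ℂ :=
  ∑ᶠ a ∈ A, charVal n (sympForm a ξ)

/-- Euclidean Fourier transform of the indicator of `A`. -/
noncomputable def euclFT {n : ℕ} (A : Set (ZMod n × ZMod n)) (ξ : ZMod n × ZMod n) : ℂ :=
  ∑ᶠ a ∈ A, charVal n (a.1 * ξ.1 + a.2 * ξ.2)

/-- Difference set `ΔA = {a - a' : a,a' ∈ A, a ≠ a'}`. -/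
def diffSet {G : Type*} [AddGroup G] (A : Set G) : Set G :=
  {d | ∃ a ∈ A, ∃ a' ∈ A, a ≠ a' ∧ d = a - a'}

/-- `A ⊕ B = G`: every element of `G` is uniquely a sum `a + b` with `a ∈ A`, `b ∈ B`. -/
def IsTilingPair {G : Type*} [AddCommGroup G] (A B : Set G) : Prop :=
  ∀ g : G, ∃! p : G × G, p.1 ∈ A ∧ p.2 ∈ B ∧ p.1 + p.2 = g

/-- Symplectic orthogonal set `H^{⊥s}`. -/
def sympPerp {n : ℕ} (H : Set (ZMod n × ZMod n)) : Set (ZMod n × ZMod n) :=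
  {g | ∀ h ∈ H, sympForm g h = 0}

/-- `(A,S)` is a symplectic spectral pair: `|A| = |S|` and `ΔS ⊆ Z(1̂_A^{sym})`. -/
def IsSympSpectralPair {n : ℕ} (A S : Set (ZMod n × ZMod n)) : Prop :=
  Nat.card A = Nat.card S ∧ ∀ s ∈ S, ∀ s' ∈ S, s ≠ s' → symFT A (s - s') = 0

section Aux

variable {n : ℕ} [NeZero n]

lemma charVal_eq_stdAddChar (t : ZMod n) : charVal n t = ZMod.stdAddChar t := by
  have : ((t.val : ℤ) : ZMod n) = t := by
    push_cast
    rw [ZMod.natCast_val, ZMod.cast_id]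
  conv_rhs => rw [← this]
  rw [ZMod.stdAddChar_coe, charVal]
  push_cast
  rfl

/-- `sympForm a ·` restricted to `H` as an additive monoid hom. -/
def sympHom (a : ZMod n × ZMod n) (H : AddSubgroup (ZMod n × ZMod n)) : H →+ ZMod n where
  toFun h := sympForm a h
  map_zero' := by simp [sympForm]
  map_add' x y := by simp [sympForm]; ring

end Aux

theorem not_annihilate_larger_subgroup (n : ℕ) (hn : 0 < n)
    (A : Set (ZMod n × ZMod n)) (hA : A.Nonempty)
    (H : AddSubgroup (ZMod n × ZMod n)) (hcard : Nat.card A < Nat.card H) :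
    ∃ h ∈ H, h ≠ 0 ∧ symFT A h ≠ 0 := by
  haveI : NeZero n := ⟨hn.ne'⟩
  by_contra hcon
  push_neg at hcon
  have h0 : ∀ h : H, (h : ZMod n × ZMod n) ≠ 0 → symFT A (h : ZMod n × ZMod n) = 0 := by
    intro h hne
    exact hcon h h.2 hne
  have hAfin : A.Finite := Set.toFinite A
  set F : Finset (ZMod n × ZMod n) := hAfin.toFinset with hF
  have hFA : (F : Set (ZMod n × ZMod n)) = A := hAfin.coe_toFinset
  have hsymFT : ∀ ξ, symFT A ξ = ∑ a ∈ F, charVal n (sympForm a ξ) := by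
    intro ξ
    rw [symFT, ← hFA, finsum_mem_coe_finset]
  -- the character attached to `a`
  set ψ : (ZMod n × ZMod n) → AddChar H ℂ :=
    fun a => (ZMod.stdAddChar).compAddMonoidHom (sympHom a H) with hψ
  -- total sum over H
  have key : ∑ h : H, symFT A (h : ZMod n × ZMod n)
      = ∑ a ∈ F, ∑ h : H, ψ a h := by
    simp_rw [hsymFT]
    rw [Finset.sum_comm]
    refine Finset.sum_congr rfl fun a _ => Finset.sum_congr rfl fun h _ => ?_
    rw [charVal_eq_stdAddChar]
    rfl
  -- left side equals |A|
  have hleft : ∑ h : H, symFT A (h : ZMod n × ZMod n) = (F.card : ℂ) := by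
    rw [Finset.sum_eq_single (0 : H)]
    · rw [hsymFT]
      have : ∀ a ∈ F, charVal n (sympForm a ((0 : H) : ZMod n × ZMod n)) = 1 := by
        intro a _
        simp [sympForm, charVal]
      rw [Finset.sum_congr rfl this]
      simp
    · intro h _ hne
      refine h0 h fun hc => hne ?_
      exact Subtype.ext hc
    · intro habs
      exact absurd (Finset.mem_univ _) habs
  -- right side
  have hright : ∑ a ∈ F, ∑ h : H, ψ a h
      = ((F.filter (fun a => ψ a = 0)).card : ℂ) * (Nat.card H : ℂ) := by
    classical
    rw [Finset.sum_congr rfl (fun a _ => AddChar.sum_eq_ite (ψ a))]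
    rw [Finset.sum_ite, Finset.sum_const_zero, add_zero, Finset.sum_const]
    simp [Nat.card_eq_fintype_card, mul_comm]
  set k := (F.filter (fun a => ψ a = 0)).card with hk
  have hnat : F.card = k * Nat.card H := by
    have : (F.card : ℂ) = (k * Nat.card H : ℕ) := by
      rw [← hleft, key, hright]; push_cast; ring
    exact_mod_cast this
  have hcardA : Nat.card A = F.card := by
    rw [Nat.card_coe_set_eq, ← hFA]
    simp
  have hFpos : 0 < F.card := by
    rw [← hcardA]
    have := hA.to_subtype
    exact Nat.card_pos
  rcases Nat.eq_zero_or_pos k with hk0 | hkpos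
  · rw [hk0, zero_mul] at hnat; omega
  · have : Nat.card H ≤ F.card := by
      calc Nat.card H = 1 * Nat.card H := (one_mul _).symm
      _ ≤ k * Nat.card H := Nat.mul_le_mul_right _ hkpos
      _ = F.card := hnat.symm
    omega
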